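/- Let C be a class of matrices containing a matrix with some entry of absolute value at least 2. Then there exists a matrix M ∈ C, say of size d, such that λ_{n+1}(M) ≥ 2·λ_n(M) for every n ∈ ℕ, where λ_ℓ(M) = (M^ℓ·e₁)(1) and e₁ ∈ ℤ^d is the first standard basis vector. -/

import Mathlib

/-- The permutation matrix of a permutation `σ`: its `(i, j)` entry is `1` iff `i = σ j`. -/
def permMat {m : ℕ} (σ : Equiv.Perm (Fin m)) : Matrix (Fin m) (Fin m) ℤ :=
  Matrix.of fun i j => if i = σ j then 1 else 0

/-- `extMat A n` is the block-diagonal matrix `diag(A, I_n)`. -/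
def extMat {k : ℕ} (A : Matrix (Fin k) (Fin k) ℤ) (n : ℕ) :
    Matrix (Fin (k + n)) (Fin (k + n)) ℤ :=
  Matrix.reindex finSumFinEquiv finSumFinEquiv
    (Matrix.fromBlocks A 0 0 (1 : Matrix (Fin n) (Fin n) ℤ))

/-- A *class of matrices*: a set of square integer matrices of arbitrary sizes, closed
under conjugation by permutation matrices, extension by identity blocks, containing all
identity matrices, and closed under products of equal-size matrices. -/
structure MatrixClass where
  carrier : ∀ k : ℕ, Set (Matrix (Fin k) (Fin k) ℤ)
  perm_mem : ∀ {k : ℕ} (A : Matrix (Fin k) (Fin k) ℤ), A ∈ carrier k →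
    ∀ σ : Equiv.Perm (Fin k), permMat σ * A * permMat σ⁻¹ ∈ carrier k
  ext_mem : ∀ {k : ℕ} (A : Matrix (Fin k) (Fin k) ℤ), A ∈ carrier k →
    ∀ n : ℕ, 1 ≤ n → extMat A n ∈ carrier (k + n)
  one_mem : ∀ n : ℕ, 1 ≤ n → (1 : Matrix (Fin n) (Fin n) ℤ) ∈ carrier n
  mul_mem : ∀ {k : ℕ} (A B : Matrix (Fin k) (Fin k) ℤ),
    A ∈ carrier k → B ∈ carrier k → A * B ∈ carrier k

/-!
A diagonal entry of absolute value at least `2` is produced first: if `|A i j| ≥ 2` while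
`|A i i|, |A j j| ≤ 1`, then for `F = diag(A, I)` and a suitable permutation `σ` the `(i, i)` entry
of `F * σ(F)` is `A i i * A j j + A i j ^ 2`.

So let `B = [[p, r], [c, D]]` with `|p| ≥ 2`. The gadget `V` lives on a hub coordinate and `n`
copies of the remaining ones; it is the product of `n` gates, the `ℓ`-th acting as `B` on the hub
and the `ℓ`-th copy. Multiplying by `V`, the hub coordinate of `v` becomes
`pⁿ v₀ + ∑ₘ p ^ (n - 1 - m) r ⬝ vₘ`, and copy `m` becomes `c hₘ + D vₘ`, where `hₘ` is the hub
coordinate after the first `m` gates. Measuring the copies by `Y v = ∑ₘ |p| ^ (n - 1 - m) ‖vₘ‖₁`,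
the hub coordinate is multiplied by `pⁿ` up to an error `O(Y)`, while `Y` grows at most by a
factor polynomial in `n`, plus a multiple of the hub coordinate. For even and large `n` the
exponential `pⁿ = |p|ⁿ` beats these polynomial factors, so `2 N Y ≤ pⁿ x` (with `N` a bound on
the entries of `B`) propagates along the orbit of `e₀` and forces the hub coordinate `x` to at
least double at each step.
-/

open Matrix

section WeightedSum

variable {R : Type*} [CommSemiring R]

def weightedSum (q : R) (f : ℕ → R) (t : ℕ) : R :=
  ∑ m ∈ Finset.range t, q ^ (t - 1 - m) * f m

lemma weightedSum_succ (q : R) (f : ℕ → R) (t : ℕ) :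
    weightedSum q f (t + 1) = q * weightedSum q f t + f t := by
  rw [weightedSum, Finset.sum_range_succ, weightedSum, Finset.mul_sum, Nat.add_sub_cancel,
    Nat.sub_self, pow_zero, one_mul]
  congr 1
  refine Finset.sum_congr rfl fun m hm => ?_
  rw [Finset.mem_range] at hm
  rw [show t - m = t - 1 - m + 1 by omega, pow_succ]
  ring

end WeightedSum

section Estimates

variable {R : Type*} [CommRing R] [LinearOrder R] [IsStrictOrderedRing R]

lemma abs_sum_mul_le {ι : Type*} [Fintype ι] {a : ι → R} {N : R} (ha : ∀ i, |a i| ≤ N)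
    (b : ι → R) : |∑ i, a i * b i| ≤ N * ∑ i, |b i| := by
  rw [Finset.mul_sum]
  refine (Finset.abs_sum_le_sum_abs _ _).trans (Finset.sum_le_sum fun i _ => ?_)
  rw [abs_mul]
  exact mul_le_mul_of_nonneg_right (ha i) (abs_nonneg _)

variable {q : R} {f : ℕ → R}

lemma weightedSum_nonneg (hq : 0 ≤ q) (hf : ∀ m, 0 ≤ f m) (t : ℕ) : 0 ≤ weightedSum q f t :=
  Finset.sum_nonneg fun m _ => mul_nonneg (pow_nonneg hq _) (hf m)

lemma pow_mul_weightedSum_le (hq : 0 ≤ q) (hf : ∀ m, 0 ≤ f m) {t s : ℕ} (h : t ≤ s) :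
    q ^ (s - t) * weightedSum q f t ≤ weightedSum q f s := by
  induction s, h using Nat.le_induction with
  | base => simp
  | succ s hts ih =>
    rw [weightedSum_succ q f, show s + 1 - t = s - t + 1 by omega, pow_succ', mul_assoc]
    nlinarith [hf s]

lemma pow_mul_le_weightedSum (hq : 0 ≤ q) (hf : ∀ m, 0 ≤ f m) {m t : ℕ} (h : m < t) :
    q ^ (t - 1 - m) * f m ≤ weightedSum q f t :=
  Finset.single_le_sum (f := fun m => q ^ (t - 1 - m) * f m)
    (fun m _ => mul_nonneg (pow_nonneg hq _) (hf m)) (Finset.mem_range.mpr h)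

theorem two_mul_le_succ_of_dominant {x Y : ℕ → R} {P α β γ : R} (hα : 0 ≤ α) (hγ : 0 ≤ γ)
    (hP : 4 ≤ P) (hαβ : 8 * α * β ≤ P ^ 2) (hγP : 4 * γ ≤ P) (hx₀ : x 0 = 1) (hY₀ : Y 0 = 0)
    (hx : ∀ t, 0 ≤ x t → P * x t - α * Y t ≤ x (t + 1))
    (hY : ∀ t, 0 ≤ x t → Y (t + 1) ≤ β * x t + γ * Y t) (t : ℕ) :
    2 * x t ≤ x (t + 1) := by
  have amplify : ∀ t, 0 ≤ x t → 2 * α * Y t ≤ P * x t → P * x t ≤ 2 * x (t + 1) :=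
    fun t h₀ h₁ => by linarith [hx t h₀]
  have inv : ∀ t, 0 ≤ x t ∧ 2 * α * Y t ≤ P * x t := by
    intro t
    induction t with
    | zero => exact ⟨by rw [hx₀]; exact zero_le_one, by rw [hx₀, hY₀]; linarith⟩
    | succ t ih =>
      obtain ⟨h₀, h₁⟩ := ih
      have h₂ := amplify t h₀ h₁
      have hPx : 0 ≤ P * x t := mul_nonneg (by linarith) h₀
      have hY' : 2 * α * Y (t + 1) ≤ 2 * α * (β * x t + γ * Y t) :=
        mul_le_mul_of_nonneg_left (hY t h₀) (by linarith)
      refine ⟨by linarith, ?_⟩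
      nlinarith [mul_le_mul_of_nonneg_right hαβ h₀, mul_le_mul_of_nonneg_left h₁ hγ,
        mul_le_mul_of_nonneg_right hγP hPx, mul_le_mul_of_nonneg_left h₂ (by linarith : 0 ≤ P)]
  obtain ⟨h₀, h₁⟩ := inv t
  nlinarith [amplify t h₀ h₁, mul_le_mul_of_nonneg_right hP h₀]

end Estimates

lemma exists_even_mul_le_two_pow (a : ℕ) : ∃ n, Even n ∧ 2 ≤ n ∧ a * n ≤ 2 ^ n := by
  refine ⟨2 ^ (a + 1), ⟨2 ^ a, by ring⟩, ?_, ?_⟩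
  · exact le_self_pow₀ one_le_two (Nat.succ_ne_zero a)
  · have ha : a + 1 ≤ 2 ^ a := Nat.lt_two_pow_self
    calc a * 2 ^ (a + 1) ≤ 2 ^ a * 2 ^ (a + 1) := Nat.mul_le_mul_right _ (by omega)
      _ = 2 ^ (2 * a + 1) := by ring
      _ ≤ 2 ^ 2 ^ (a + 1) := Nat.pow_le_pow_right two_pos (by rw [pow_succ]; omega)

lemma permMat_eq_toMatrix {k : ℕ} (σ : Equiv.Perm (Fin k)) :
    permMat σ = σ⁻¹.toPEquiv.toMatrix := by
  ext i j
  simp only [permMat, of_apply, PEquiv.toMatrix_apply, Equiv.toPEquiv_apply, Option.mem_def,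
    Option.some.injEq, Equiv.Perm.inv_def, Equiv.symm_apply_eq]

lemma permMat_mul_mul_permMat_inv {k : ℕ} (σ : Equiv.Perm (Fin k))
    (A : Matrix (Fin k) (Fin k) ℤ) : permMat σ * A * permMat σ⁻¹ = reindex σ σ A := by
  rw [permMat_eq_toMatrix, permMat_eq_toMatrix, inv_inv, PEquiv.toMatrix_toPEquiv_mul,
    PEquiv.mul_toMatrix_toPEquiv]
  rfl

namespace MatrixClass

variable {C : MatrixClass}

lemma reindex_mem_carrier {a b : ℕ} {A : Matrix (Fin a) (Fin a) ℤ} (hA : A ∈ C.carrier a)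
    (e : Fin a ≃ Fin b) : reindex e e A ∈ C.carrier b := by
  obtain rfl : a = b := by simpa using Fintype.card_congr e
  simpa [permMat_mul_mul_permMat_inv] using C.perm_mem A hA e

variable (C) in
def Mem {ι : Type*} [Fintype ι] [DecidableEq ι] (M : Matrix ι ι ℤ) : Prop :=
  ∃ (k : ℕ) (e : ι ≃ Fin k), reindex e e M ∈ C.carrier k

lemma mem_of_mem_carrier {k : ℕ} {A : Matrix (Fin k) (Fin k) ℤ} (hA : A ∈ C.carrier k) :
    C.Mem A :=
  ⟨k, Equiv.refl _, by simpa using hA⟩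

namespace Mem

variable {ι ι' : Type*} [Fintype ι] [DecidableEq ι] [Fintype ι'] [DecidableEq ι']
  {M N : Matrix ι ι ℤ}

lemma reindex_mem_carrier (hM : C.Mem M) {k : ℕ} (e : ι ≃ Fin k) :
    reindex e e M ∈ C.carrier k := by
  obtain ⟨k', e', hM⟩ := hM
  simpa [reindex_apply, Function.comp_def] using
    MatrixClass.reindex_mem_carrier hM (e'.symm.trans e)

lemma reindex (hM : C.Mem M) (f : ι ≃ ι') : C.Mem (reindex f f M) := by
  obtain ⟨k, e, hM⟩ := hM
  exact ⟨k, f.symm.trans e, by simpa [reindex_apply, Function.comp_def] using hM⟩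

lemma mul (hM : C.Mem M) (hN : C.Mem N) : C.Mem (M * N) := by
  obtain ⟨k, e, hM⟩ := hM
  refine ⟨k, e, ?_⟩
  rw [← coe_reindexAlgEquiv ℤ ℤ, map_mul]
  exact C.mul_mem _ _ hM (hN.reindex_mem_carrier e)

lemma one [Nonempty ι] : C.Mem (1 : Matrix ι ι ℤ) :=
  ⟨_, Fintype.equivFin ι, by simpa using C.one_mem _ Fintype.card_pos⟩

lemma fromBlocks_one (hM : C.Mem M) (β : Type*) [Fintype β] [DecidableEq β] :
    C.Mem (fromBlocks M 0 0 (1 : Matrix β β ℤ)) := by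
  cases isEmpty_or_nonempty β
  · convert hM.reindex (Equiv.sumEmpty ι β).symm
    ext (i | b) (j | b') <;> simp [reindex_apply] <;> exact isEmptyElim ‹β›
  · obtain ⟨k, e, hM⟩ := hM
    refine ⟨k + Fintype.card β, (e.sumCongr (Fintype.equivFin β)).trans finSumFinEquiv, ?_⟩
    convert C.ext_mem _ hM _ (Fintype.card_pos (α := β)) using 1
    ext i j
    rcases h₁ : finSumFinEquiv.symm i with i' | i' <;>
      rcases h₂ : finSumFinEquiv.symm j with j' | j' <;>
      simp [extMat, reindex_apply, h₁, h₂, one_apply]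

lemma exists_pow_apply_eq (hM : C.Mem M) (a : ι) :
    ∃ (d : ℕ) (hd : 0 < d) (M' : Matrix (Fin d) (Fin d) ℤ), M' ∈ C.carrier d ∧
      ∀ t : ℕ, (M' ^ t) ⟨0, hd⟩ ⟨0, hd⟩ = (M ^ t) a a := by
  obtain ⟨d, e, hM⟩ := hM
  have hd : 0 < d := (e a).pos
  let f := e.trans (Equiv.swap (e a) ⟨0, hd⟩)
  refine ⟨d, hd, Matrix.reindex f f M, Mem.reindex_mem_carrier ⟨d, e, hM⟩ f, fun t => ?_⟩
  rw [← coe_reindexAlgEquiv ℤ ℤ, ← map_pow]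
  simp [f, reindex_apply]

end Mem

end MatrixClass

section BigDiagonal

variable {ι : Type*} [DecidableEq ι]

def crossSwap (i j : ι) : ι ⊕ ι ≃ ι ⊕ ι :=
  ((Equiv.swap (.inl i) (.inr j)).trans (Equiv.swap (.inl j) (.inr i))).trans (Equiv.sumComm ι ι)

lemma crossSwap_inl_left {i j : ι} (hij : i ≠ j) : crossSwap i j (.inl i) = .inl j := by
  simp [crossSwap, Equiv.swap_apply_of_ne_of_ne, hij.symm]

lemma crossSwap_inl_right {i j : ι} (hij : i ≠ j) : crossSwap i j (.inl j) = .inl i := by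
  simp [crossSwap, Equiv.swap_apply_of_ne_of_ne, hij.symm]

lemma crossSwap_inl_of_ne {i j u : ι} (hi : u ≠ i) (hj : u ≠ j) :
    crossSwap i j (.inl u) = .inr u := by
  simp [crossSwap, Equiv.swap_apply_of_ne_of_ne, hi, hj]

lemma fromBlocks_mul_submatrix_crossSwap_apply [Fintype ι] (A : Matrix ι ι ℤ) {i j : ι}
    (hij : i ≠ j) :
    let F := fromBlocks A 0 0 (1 : Matrix ι ι ℤ)
    (F * F.submatrix (crossSwap i j) (crossSwap i j)) (.inl i) (.inl i) =
      A i i * A j j + A i j * A i j := by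
  intro F
  rw [mul_apply, Fintype.sum_sum_type]
  simp only [F, fromBlocks_apply₁₂, Matrix.zero_apply, zero_mul, Finset.sum_const_zero, add_zero,
    fromBlocks_apply₁₁, submatrix_apply, crossSwap_inl_left hij]
  rw [Fintype.sum_eq_add i j hij fun u ⟨hi, hj⟩ => by simp [crossSwap_inl_of_ne hi hj]]
  simp [crossSwap_inl_left hij, crossSwap_inl_right hij]

end BigDiagonal

namespace MatrixClass

variable {C : MatrixClass}

lemma exists_two_le_abs_diag {k : ℕ} {A : Matrix (Fin k) (Fin k) ℤ} (hA : A ∈ C.carrier k)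
    {i j : Fin k} (hij : 2 ≤ |A i j|) :
    ∃ (k' : ℕ) (A' : Matrix (Fin k') (Fin k') ℤ) (a : Fin k'), A' ∈ C.carrier k' ∧
      2 ≤ |A' a a| := by
  by_cases hii : 2 ≤ |A i i|
  · exact ⟨k, A, i, hA, hii⟩
  by_cases hjj : 2 ≤ |A j j|
  · exact ⟨k, A, j, hA, hjj⟩
  have hne : i ≠ j := by rintro rfl; exact hii hij
  have hF := (mem_of_mem_carrier hA).fromBlocks_one (Fin k)
  obtain ⟨k', e, hG⟩ := hF.mul (hF.reindex (crossSwap i j).symm)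
  refine ⟨k', _, e (.inl i), hG, ?_⟩
  rw [reindex_apply, submatrix_apply, Equiv.symm_apply_apply, reindex_apply,
    Equiv.symm_symm, fromBlocks_mul_submatrix_crossSwap_apply A hne]
  have h₁ : |A i i * A j j| ≤ 1 := by
    rw [abs_mul]; nlinarith [abs_nonneg (A i i), abs_nonneg (A j j)]
  have h₂ : 4 ≤ |A i j * A i j| := by rw [abs_mul]; nlinarith
  have := abs_sub_abs_le_abs_sub (A i j * A i j) (-(A i i * A j j))
  rw [abs_neg, sub_neg_eq_add, add_comm] at this
  linarith

end MatrixClass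

lemma reindex_fromBlocks_one_mulVec_inl {R α β γ : Type*} [NonAssocSemiring R] [Fintype α]
    [Fintype β] [Fintype γ] [DecidableEq β] (e : α ⊕ β ≃ γ) (A : Matrix α α R) (u : γ → R)
    (a : α) :
    (reindex e e (fromBlocks A 0 0 1) *ᵥ u) (e (.inl a)) = ∑ b, A a b * u (e (.inl b)) := by
  simp [reindex_apply, mulVec, dotProduct, ← e.sum_comp, Fintype.sum_sum_type]

lemma reindex_fromBlocks_one_mulVec_inr {R α β γ : Type*} [NonAssocSemiring R] [Fintype α]
    [Fintype β] [Fintype γ] [DecidableEq β] (e : α ⊕ β ≃ γ) (A : Matrix α α R) (u : γ → R)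
    (b : β) : (reindex e e (fromBlocks A 0 0 1) *ᵥ u) (e (.inr b)) = u (e (.inr b)) := by
  simp [reindex_apply, submatrix_mulVec_equiv, fromBlocks_mulVec]

namespace Gadget

variable {κ : Type*} [Fintype κ] [DecidableEq κ]

/- On `Option (Fin n × κ)`, `none` is the hub and `some (m, x)` is coordinate `x` of the `m`-th
copy; `B` is indexed by `Option κ` with `none` as its big diagonal entry. -/
def blockEquiv {n : ℕ} (ℓ : Fin n) : Option κ ⊕ ({m // m ≠ ℓ} × κ) ≃ Option (Fin n × κ) where
  toFun := Sum.elim (Option.map (ℓ, ·)) fun y => some (y.1, y.2)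
  invFun
    | none => .inl none
    | some (m, x) => if h : m = ℓ then .inl (some x) else .inr (⟨m, h⟩, x)
  left_inv := by
    rintro ((_ | x) | ⟨⟨m, hm⟩, x⟩)
    · rfl
    · simp
    · simp [hm]
  right_inv := by
    rintro (_ | ⟨m, x⟩)
    · rfl
    · by_cases h : m = ℓ <;> simp [h]

variable (B : Matrix (Option κ) (Option κ) ℤ) {n : ℕ}

def gate (ℓ : Fin n) : Matrix (Option (Fin n × κ)) (Option (Fin n × κ)) ℤ :=
  reindex (blockEquiv ℓ) (blockEquiv ℓ) (fromBlocks B 0 0 1)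

lemma gate_mulVec_none (ℓ : Fin n) (u : Option (Fin n × κ) → ℤ) :
    (gate B ℓ *ᵥ u) none = B none none * u none + ∑ y, B none (some y) * u (some (ℓ, y)) := by
  rw [show (none : Option (Fin n × κ)) = blockEquiv ℓ (.inl none) from rfl, gate,
    reindex_fromBlocks_one_mulVec_inl, Fintype.sum_option]
  rfl

lemma gate_mulVec_some_self (ℓ : Fin n) (x : κ) (u : Option (Fin n × κ) → ℤ) :
    (gate B ℓ *ᵥ u) (some (ℓ, x)) =
      B (some x) none * u none + ∑ y, B (some x) (some y) * u (some (ℓ, y)) := by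
  rw [show some (ℓ, x) = blockEquiv ℓ (.inl (some x)) from rfl, gate,
    reindex_fromBlocks_one_mulVec_inl, Fintype.sum_option]
  rfl

lemma gate_mulVec_some_of_ne {ℓ m : Fin n} (h : m ≠ ℓ) (x : κ) (u : Option (Fin n × κ) → ℤ) :
    (gate B ℓ *ᵥ u) (some (m, x)) = u (some (m, x)) :=
  reindex_fromBlocks_one_mulVec_inr (blockEquiv ℓ) B u (⟨m, h⟩, x)

variable (n) in
def gateProd : ℕ → Matrix (Option (Fin n × κ)) (Option (Fin n × κ)) ℤ
  | 0 => 1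
  | t + 1 => (if h : t < n then gate B ⟨t, h⟩ else 1) * gateProd t

variable (n) in
def gadget : Matrix (Option (Fin n × κ)) (Option (Fin n × κ)) ℤ := gateProd B n n

lemma gateProd_succ {t : ℕ} (h : t < n) :
    gateProd B n (t + 1) = gate B ⟨t, h⟩ * gateProd B n t := by
  simp [gateProd, h]

lemma gateProd_succ_mulVec_apply_some {t : ℕ} {m : Fin n} (hm : m.val ≠ t) (x : κ)
    (v : Option (Fin n × κ) → ℤ) :
    (gateProd B n (t + 1) *ᵥ v) (some (m, x)) = (gateProd B n t *ᵥ v) (some (m, x)) := by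
  by_cases h : t < n
  · rw [gateProd_succ B h, ← mulVec_mulVec]
    exact gate_mulVec_some_of_ne B (fun e => hm (by simp [e])) x _
  · simp [gateProd, h]

lemma gateProd_mulVec_apply_some_of_le {t : ℕ} {m : Fin n} (h : t ≤ m) (x : κ)
    (v : Option (Fin n × κ) → ℤ) : (gateProd B n t *ᵥ v) (some (m, x)) = v (some (m, x)) := by
  induction t with
  | zero => simp [gateProd]
  | succ t ih => rw [gateProd_succ_mulVec_apply_some B (by omega), ih (by omega)]

lemma gateProd_mulVec_apply_some_of_lt {t : ℕ} {m : Fin n} (h : m.val < t) (x : κ)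
    (v : Option (Fin n × κ) → ℤ) :
    (gateProd B n t *ᵥ v) (some (m, x)) = (gateProd B n (m + 1) *ᵥ v) (some (m, x)) := by
  induction t, h using Nat.le_induction with
  | base => rfl
  | succ t ht ih => rw [gateProd_succ_mulVec_apply_some B (by omega), ih]

lemma gateProd_succ_mulVec_apply_none {t : ℕ} (h : t < n) (v : Option (Fin n × κ) → ℤ) :
    (gateProd B n (t + 1) *ᵥ v) none = B none none * (gateProd B n t *ᵥ v) none +
      ∑ y, B none (some y) * v (some (⟨t, h⟩, y)) := by
  rw [gateProd_succ B h, ← mulVec_mulVec, gate_mulVec_none]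
  simp only [gateProd_mulVec_apply_some_of_le B (m := ⟨t, h⟩) le_rfl]

lemma gadget_mulVec_apply_some (m : Fin n) (x : κ) (v : Option (Fin n × κ) → ℤ) :
    (gadget B n *ᵥ v) (some (m, x)) = B (some x) none * (gateProd B n m *ᵥ v) none +
      ∑ y, B (some x) (some y) * v (some (m, y)) := by
  rw [gadget, gateProd_mulVec_apply_some_of_lt B m.isLt, gateProd_succ B m.isLt, ← mulVec_mulVec,
    Fin.eta, gate_mulVec_some_self]
  simp only [gateProd_mulVec_apply_some_of_le B (m := m) le_rfl]

end Gadget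

namespace MatrixClass.Mem

variable {C : MatrixClass} {κ : Type*} [Fintype κ] [DecidableEq κ]
  {B : Matrix (Option κ) (Option κ) ℤ} {n : ℕ}

lemma gate (hB : C.Mem B) (ℓ : Fin n) : C.Mem (Gadget.gate B ℓ) :=
  (hB.fromBlocks_one _).reindex _

lemma gateProd (hB : C.Mem B) (t : ℕ) : C.Mem (Gadget.gateProd B n t) := by
  induction t with
  | zero => exact one
  | succ t ih =>
    by_cases h : t < n
    · rw [Gadget.gateProd_succ B h]
      exact (hB.gate _).mul ih
    · simpa [Gadget.gateProd, h] using ih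

lemma gadget (hB : C.Mem B) (n : ℕ) : C.Mem (Gadget.gadget B n) :=
  hB.gateProd n

end MatrixClass.Mem

namespace Gadget

section BlockNorm

variable {κ : Type*} [Fintype κ] {n : ℕ}

def blockNorm (v : Option (Fin n × κ) → ℤ) (m : ℕ) : ℤ :=
  if h : m < n then ∑ x, |v (some (⟨m, h⟩, x))| else 0

lemma blockNorm_nonneg (v : Option (Fin n × κ) → ℤ) (m : ℕ) : 0 ≤ blockNorm v m := by
  unfold blockNorm
  split_ifs
  exacts [Finset.sum_nonneg fun _ _ => abs_nonneg _, le_rfl]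

end BlockNorm

variable {κ : Type*} [Fintype κ] [DecidableEq κ] {B : Matrix (Option κ) (Option κ) ℤ} {n : ℕ}
  {N : ℤ}

lemma abs_gateProd_mulVec_none_sub_le (hN : ∀ a b, |B a b| ≤ N) (v : Option (Fin n × κ) → ℤ)
    {t : ℕ} (ht : t ≤ n) :
    |(gateProd B n t *ᵥ v) none - B none none ^ t * v none| ≤
      N * weightedSum |B none none| (blockNorm v) t := by
  induction t with
  | zero => simp [gateProd, weightedSum]
  | succ t ih =>
    have h : t < n := ht
    rw [gateProd_succ_mulVec_apply_none B h, weightedSum_succ, blockNorm, dif_pos h]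
    calc _ = |B none none * ((gateProd B n t *ᵥ v) none - B none none ^ t * v none) +
          ∑ y, B none (some y) * v (some (⟨t, h⟩, y))| := by ring_nf
      _ ≤ |B none none| * (N * weightedSum |B none none| (blockNorm v) t) +
          N * ∑ y, |v (some (⟨t, h⟩, y))| := by
        grw [abs_add_le, abs_mul, ih h.le, abs_sum_mul_le fun y => hN _ _]
      _ = _ := by ring

lemma blockNorm_gadget_mulVec_le (hN : ∀ a b, |B a b| ≤ N) (v : Option (Fin n × κ) → ℤ)
    (m : Fin n) :
    blockNorm (gadget B n *ᵥ v) m ≤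
      Fintype.card κ * N * (|(gateProd B n m *ᵥ v) none| + blockNorm v m) := by
  simp only [blockNorm, dif_pos m.isLt, Fin.eta, gadget_mulVec_apply_some]
  calc _ ≤ ∑ _x : κ, (N * |(gateProd B n m *ᵥ v) none| + N * ∑ y, |v (some (m, y))|) :=
        Finset.sum_le_sum fun x _ => by
          grw [abs_add_le, abs_mul, hN, abs_sum_mul_le fun y => hN _ _]
    _ = _ := by simp only [Finset.sum_const, Finset.card_univ, nsmul_eq_mul]; ring

lemma abs_gateProd_mulVec_none_le (hN : ∀ a b, |B a b| ≤ N) (v : Option (Fin n × κ) → ℤ)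
    {t : ℕ} (ht : t ≤ n) :
    |(gateProd B n t *ᵥ v) none| ≤
      |B none none| ^ t * |v none| + N * weightedSum |B none none| (blockNorm v) t := by
  have := abs_gateProd_mulVec_none_sub_le hN v ht
  have := abs_sub_abs_le_abs_sub ((gateProd B n t *ᵥ v) none) (B none none ^ t * v none)
  rw [abs_mul, abs_pow] at this
  linarith

lemma pow_mul_blockNorm_gadget_mulVec_le (hN : ∀ a b, |B a b| ≤ N) (hN₁ : 1 ≤ N)
    (hp : 1 ≤ |B none none|) (v : Option (Fin n × κ) → ℤ) {m : ℕ} (hm : m < n) :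
    |B none none| ^ (n - 1 - m) * blockNorm (gadget B n *ᵥ v) m ≤
      Fintype.card κ * N * (|B none none| ^ n * |v none| +
        2 * N * weightedSum |B none none| (blockNorm v) n) := by
  set q := |B none none|
  set W := weightedSum q (blockNorm v)
  have hq : 0 ≤ q := by linarith
  have hW : q ^ (n - 1 - m) * W m ≤ W n :=
    calc _ ≤ q ^ (n - m) * W m :=
          mul_le_mul_of_nonneg_right (pow_le_pow_right₀ hp (by omega))
            (weightedSum_nonneg hq (blockNorm_nonneg v) m)
      _ ≤ W n := pow_mul_weightedSum_le hq (blockNorm_nonneg v) hm.le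
  have hf : q ^ (n - 1 - m) * blockNorm v m ≤ W n :=
    pow_mul_le_weightedSum hq (blockNorm_nonneg v) hm
  have hpow : q ^ (n - 1 - m) * q ^ m ≤ q ^ n := by
    rw [← pow_add]
    exact pow_le_pow_right₀ hp (by omega)
  have inner : q ^ (n - 1 - m) * (|(gateProd B n m *ᵥ v) none| + blockNorm v m) ≤
      q ^ n * |v none| + 2 * N * W n := by
    calc _ ≤ q ^ (n - 1 - m) * (q ^ m * |v none| + N * W m + blockNorm v m) :=
          mul_le_mul_of_nonneg_left (by linarith [abs_gateProd_mulVec_none_le hN v hm.le])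
            (pow_nonneg hq _)
      _ = q ^ (n - 1 - m) * q ^ m * |v none| + N * (q ^ (n - 1 - m) * W m) +
          q ^ (n - 1 - m) * blockNorm v m := by ring
      _ ≤ _ := by
        nlinarith [mul_le_mul_of_nonneg_right hpow (abs_nonneg (v none)),
          mul_le_mul_of_nonneg_left hW (by linarith : (0 : ℤ) ≤ N),
          mul_le_mul_of_nonneg_right hN₁ (weightedSum_nonneg hq (blockNorm_nonneg v) n)]
  calc _ ≤ q ^ (n - 1 - m) *
        (Fintype.card κ * N * (|(gateProd B n m *ᵥ v) none| + blockNorm v m)) :=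
        mul_le_mul_of_nonneg_left (blockNorm_gadget_mulVec_le hN v ⟨m, hm⟩) (pow_nonneg hq _)
    _ = Fintype.card κ * N *
        (q ^ (n - 1 - m) * (|(gateProd B n m *ᵥ v) none| + blockNorm v m)) := by ring
    _ ≤ _ := mul_le_mul_of_nonneg_left inner (by positivity)

lemma weightedSum_blockNorm_gadget_mulVec_le (hN : ∀ a b, |B a b| ≤ N) (hN₁ : 1 ≤ N)
    (hp : 1 ≤ |B none none|) (v : Option (Fin n × κ) → ℤ) :
    weightedSum |B none none| (blockNorm (gadget B n *ᵥ v)) n ≤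
      n * Fintype.card κ * N * (|B none none| ^ n * |v none| +
        2 * N * weightedSum |B none none| (blockNorm v) n) := by
  calc _ ≤ ∑ _m ∈ Finset.range n, Fintype.card κ * N *
        (|B none none| ^ n * |v none| + 2 * N * weightedSum |B none none| (blockNorm v) n) :=
        Finset.sum_le_sum fun m hm =>
          pow_mul_blockNorm_gadget_mulVec_le hN hN₁ hp v (Finset.mem_range.mp hm)
    _ = _ := by simp only [Finset.sum_const, Finset.card_range, nsmul_eq_mul]; ring

theorem two_mul_gadget_pow_le (hN : ∀ a b, |B a b| ≤ N) (hN₁ : 1 ≤ N)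
    (hp : 2 ≤ |B none none|) (hn : Even n) (hn₂ : 2 ≤ n)
    (hbig : 8 * n * Fintype.card κ * N ^ 2 ≤ 2 ^ n) (t : ℕ) :
    2 * (gadget B n ^ t) none none ≤ (gadget B n ^ (t + 1)) none none := by
  set q := |B none none|
  set K : ℤ := (Fintype.card κ : ℤ)
  have hqn : (2 : ℤ) ^ n ≤ q ^ n := pow_le_pow_left₀ zero_le_two hp n
  have h₄ : (4 : ℤ) ≤ 2 ^ n :=
    calc (4 : ℤ) = 2 ^ 2 := by norm_num
      _ ≤ 2 ^ n := pow_le_pow_right₀ one_le_two hn₂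
  set v : ℕ → Option (Fin n × κ) → ℤ := fun t => gadget B n ^ t *ᵥ Pi.single none 1
  have hv : ∀ t, (gadget B n ^ t) none none = v t none := fun t => by simp [v]
  have hv_succ : ∀ t, v (t + 1) = gadget B n *ᵥ v t := fun t => by
    simp only [v, pow_succ', ← mulVec_mulVec]
  rw [hv, hv]
  refine two_mul_le_succ_of_dominant (x := fun t => v t none)
    (Y := fun t => weightedSum q (blockNorm (v t)) n) (P := q ^ n) (α := N)
    (β := n * K * N * q ^ n) (γ := 2 * n * K * N ^ 2) (by positivity) (by positivity)
    (by linarith) (by nlinarith) (by linarith) (by simp [v]) (by simp [v, blockNorm, weightedSum])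
    (fun t _ => ?_) (fun t hx => ?_) t
  · have := abs_gateProd_mulVec_none_sub_le hN (v t) le_rfl
    rw [← hn.pow_abs] at this
    rw [hv_succ, gadget]
    linarith [(abs_le.mp this).1]
  · have := weightedSum_blockNorm_gadget_mulVec_le hN hN₁ (by linarith) (v t)
    rw [abs_of_nonneg hx] at this
    simp only [hv_succ]
    linarith

theorem exists_two_mul_gadget_pow_le (hp : 2 ≤ |B none none|) :
    ∃ n, ∀ t, 2 * (gadget B n ^ t) none none ≤ (gadget B n ^ (t + 1)) none none := by
  obtain ⟨M, hM⟩ := Finite.exists_le fun ab : Option κ × Option κ => (B ab.1 ab.2).natAbs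
  have hN : ∀ a b, |B a b| ≤ M + 1 := fun a b => by
    have : (B a b).natAbs ≤ M := hM (a, b)
    rw [Int.abs_eq_natAbs]
    omega
  obtain ⟨n, hn, hn₂, hbig⟩ := exists_even_mul_le_two_pow (8 * Fintype.card κ * (M + 1) ^ 2)
  refine ⟨n, two_mul_gadget_pow_le hN (by omega) hp hn hn₂ ?_⟩
  calc _ = ((8 * Fintype.card κ * (M + 1) ^ 2 * n : ℕ) : ℤ) := by push_cast; ring
    _ ≤ 2 ^ n := by exact_mod_cast hbig

end Gadget

theorem class_doubling_matrix (C : MatrixClass)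
    (h : ∃ (k : ℕ) (A : Matrix (Fin k) (Fin k) ℤ), A ∈ C.carrier k ∧
      ∃ (i j : Fin k), 2 ≤ |A i j|) :
    ∃ (d : ℕ) (hd : 0 < d) (M : Matrix (Fin d) (Fin d) ℤ), M ∈ C.carrier d ∧
      ∀ n : ℕ,
        2 * ((M ^ n).mulVec (Pi.single (⟨0, hd⟩ : Fin d) (1 : ℤ))) ⟨0, hd⟩ ≤
          ((M ^ (n + 1)).mulVec (Pi.single (⟨0, hd⟩ : Fin d) (1 : ℤ))) ⟨0, hd⟩ := by
  obtain ⟨k, A, hA, i, j, hij⟩ := h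
  obtain ⟨k, A, a, hA, ha⟩ := MatrixClass.exists_two_le_abs_diag hA hij
  set e := (Equiv.optionSubtypeNe a).symm
  have hB : C.Mem (reindex e e A) := (MatrixClass.mem_of_mem_carrier hA).reindex e
  obtain ⟨n, hdouble⟩ := Gadget.exists_two_mul_gadget_pow_le (B := reindex e e A)
    (by simpa [e] using ha)
  obtain ⟨d, hd, M, hM, hMpow⟩ := (hB.gadget n).exists_pow_apply_eq none
  refine ⟨d, hd, M, hM, fun t => ?_⟩
  simpa only [mulVec_single_one, col_apply, hMpow] using hdouble t
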